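/- arXiv:cs/0003021 — 2 statements merged into one kernel-verified Lean document; each statement's English description precedes it below -/
import Mathlib

section
/- For every propositional formula α there exists a unique smallest set of propositional variables expressing α; that is, the collection of sets of variables V such that α is logically equivalent to some formula whose variables all lie in V has a least element with respect to inclusion (equivalently, if V₁ and V₂ both express α then V₁ ∩ V₂ expresses α). -/
/-!
The sets of variables expressing `α` are closed under intersection: if `β₁` over `V₁` and `β₂`
over `V₂` are both equivalent to `α`, substituting `false` in `β₁` for the variables outside `V₂`
gives a formula over `V₁ ∩ V₂` that is still equivalent to `α`, because `β₂` does not read those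
variables. As `α.vars` is finite and expresses `α`, an inclusion-minimal expressing subset of it
is then below every expressing set.
-/

namespace BeliefSeq

/-- Propositional formulas over a type `ν` of propositional variables,
with connectives ¬, ∧, ∨, →, ↔ and constants true, false. -/
inductive PropForm (ν : Type) : Type where
  | var : ν → PropForm ν
  | tru : PropForm ν
  | fls : PropForm ν
  | neg : PropForm ν → PropForm ν
  | conj : PropForm ν → PropForm ν → PropForm ν
  | disj : PropForm ν → PropForm ν → PropForm ν
  | impl : PropForm ν → PropForm ν → PropForm ν
  | biim : PropForm ν → PropForm ν → PropForm ν

namespace PropForm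

variable {ν : Type}

/-- Classical (two-valued) evaluation of a formula under a valuation. -/
def eval (v : ν → Bool) : PropForm ν → Bool
  | var x => v x
  | tru => true
  | fls => false
  | neg φ => !(φ.eval v)
  | conj φ ψ => φ.eval v && ψ.eval v
  | disj φ ψ => φ.eval v || ψ.eval v
  | impl φ ψ => !(φ.eval v) || ψ.eval v
  | biim φ ψ => φ.eval v == ψ.eval v

/-- The set `L(α)` of variables occurring syntactically in a formula. -/
def vars : PropForm ν → Set ν
  | var x => {x}
  | tru => ∅
  | fls => ∅
  | neg φ => φ.vars
  | conj φ ψ => φ.vars ∪ ψ.vars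
  | disj φ ψ => φ.vars ∪ ψ.vars
  | impl φ ψ => φ.vars ∪ ψ.vars
  | biim φ ψ => φ.vars ∪ ψ.vars

end PropForm

variable {ν : Type}

/-- `α ⇔ β` : logical equivalence (α ↔ β is a tautology). -/
def Equiv (α β : PropForm ν) : Prop := ∀ v, α.eval v = β.eval v

def Tautology (α : PropForm ν) : Prop := ∀ v, α.eval v = true

def Contradiction (α : PropForm ν) : Prop := ∀ v, α.eval v = false

/-- Classical consequence `Γ ⊢ γ`. -/
def Entails (Γ : Set (PropForm ν)) (γ : PropForm ν) : Prop :=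
  ∀ v, (∀ φ ∈ Γ, φ.eval v = true) → γ.eval v = true

/-- Consistency (satisfiability) of a set of formulas. -/
def Satisfiable (Γ : Set (PropForm ν)) : Prop :=
  ∃ v, ∀ φ ∈ Γ, φ.eval v = true

/-- `V` expresses `α`: α is logically equivalent to some formula
all of whose variables lie in `V`. -/
def Expresses (V : Set ν) (α : PropForm ν) : Prop :=
  ∃ β : PropForm ν, Equiv α β ∧ β.vars ⊆ V

/-- `L_α` : the smallest language of `α` (intersection of all sets of
variables expressing `α`). -/
def Lang (α : PropForm ν) : Set ν := ⋂₀ {V : Set ν | Expresses V α}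

/-- Direct relevance (`0`-relevance): logical language overlap `L_α ∩ L_β ≠ ∅`. -/
def DirectRel (α β : PropForm ν) : Prop := (Lang α ∩ Lang β).Nonempty

/-- `k`-relevance of `α`, `β` w.r.t. the belief sequence `σ`:
there is a chain `χ_1, …, χ_k` of formulas of `σ` with
`α, χ₁` directly relevant, each `χ_i, χ_{i+1}` directly relevant,
and `χ_k, β` directly relevant (for `k = 0` this is direct relevance). -/
def KRel (k : ℕ) (α β : PropForm ν) (σ : List (PropForm ν)) : Prop :=
  ∃ l : List (PropForm ν), l.length = k ∧ (∀ χ ∈ l, χ ∈ σ) ∧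
    List.Chain' DirectRel (α :: (l ++ [β]))

/-- `rel(α,β,σ)` : the least `k` such that `α, β` are `k`-relevant w.r.t. `σ`
(`∞ = ⊤` if they are irrelevant). -/
noncomputable def relDeg (α β : PropForm ν) (σ : List (PropForm ν)) : ℕ∞ :=
  sInf {n : ℕ∞ | ∃ k : ℕ, n = (k : ℕ∞) ∧ KRel k α β σ}

open Classical in
/-- The priority ordering imposed by the query `γ` on the (indexed) entries of `σ`:
more relevant first; among equally relevant entries, more recent
(larger index) first. -/
noncomputable def priority (γ : PropForm ν) (σ : List (PropForm ν)) :
    (ℕ × PropForm ν) → (ℕ × PropForm ν) → Bool :=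
  fun a b =>
    decide (relDeg γ a.2 σ < relDeg γ b.2 σ ∨
      (relDeg γ a.2 σ = relDeg γ b.2 σ ∧ b.1 ≤ a.1))

/-- The entries `δ_1, …, δ_n` of `σ` reordered by the priority above. -/
noncomputable def prioritized (γ : PropForm ν) (σ : List (PropForm ν)) :
    List (PropForm ν) :=
  (((List.range σ.length).zip σ).mergeSort (priority γ σ)).map Prod.snd

open Classical in
/-- The prioritized maxiconsistent set `Γ_{⟨σ,k,γ⟩}` : go through `δ_1, …, δ_n`
in priority order, skipping `δ_{i+1}` if `Γ^i ⊢ ¬δ_{i+1}` or `δ_{i+1}` is not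
`k`-relevant to `γ` w.r.t. `σ`, and adding it otherwise. -/
noncomputable def Gamma (σ : List (PropForm ν)) (k : ℕ) (γ : PropForm ν) :
    Set (PropForm ν) :=
  (prioritized γ σ).foldl
    (fun Γ δ =>
      if Entails Γ (PropForm.neg δ) ∨ (k : ℕ∞) < relDeg γ δ σ then Γ
      else insert δ Γ) ∅

/-- `σ ⊢_k γ` iff `Γ_{⟨σ,k,γ⟩} ⊢ γ`. -/
def InferK (σ : List (PropForm ν)) (k : ℕ) (γ : PropForm ν) : Prop :=
  Entails (Gamma σ k γ) γ

/-- `C_k(σ) = {γ | σ ⊢_k γ}`. -/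
def Ck (σ : List (PropForm ν)) (k : ℕ) : Set (PropForm ν) :=
  {γ | InferK σ k γ}

/-- Revision `σ * γ` : concatenation of `γ` at the (most recent) end of `σ`. -/
def revise (σ : List (PropForm ν)) (γ : PropForm ν) : List (PropForm ν) :=
  σ ++ [γ]

theorem _root_.Set.exists_least_of_inter_closed {α : Type*} {P : Set α → Prop}
    (hP : ∀ V₁ V₂, P V₁ → P V₂ → P (V₁ ∩ V₂)) {V : Set α} (hV : P V) (hfin : V.Finite) :
    ∃ U, P U ∧ ∀ W, P W → U ⊆ W := by
  have hT : {U | P U ∧ U ⊆ V}.IsPWO :=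
    (hfin.finite_subsets.subset fun _ hU => hU.2).isPWO
  obtain ⟨U, -, hU⟩ := hT.exists_le_minimal ⟨hV, subset_rfl⟩
  refine ⟨U, hU.prop.1, fun W hW => ?_⟩
  have hUW : P (U ∩ W) ∧ U ∩ W ⊆ V :=
    ⟨hP U W hU.prop.1 hW, Set.inter_subset_left.trans hU.prop.2⟩
  exact (hU.le_of_le hUW Set.inter_subset_left).trans Set.inter_subset_right

namespace PropForm

theorem eval_congr (φ : PropForm ν) {v w : ν → Bool} (h : ∀ x ∈ φ.vars, v x = w x) :
    φ.eval v = φ.eval w := by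
  induction φ with
  | var x => exact h x rfl
  | tru | fls => rfl
  | neg φ ih => simp only [eval, ih h]
  | conj φ ψ ihφ ihψ | disj φ ψ ihφ ihψ | impl φ ψ ihφ ihψ | biim φ ψ ihφ ihψ =>
    simp only [eval, ihφ fun x hx => h x (Or.inl hx), ihψ fun x hx => h x (Or.inr hx)]

theorem vars_finite (φ : PropForm ν) : φ.vars.Finite := by
  induction φ with
  | var x => exact Set.finite_singleton x
  | tru | fls => exact Set.finite_empty
  | neg φ ih => exact ih
  | conj φ ψ ihφ ihψ | disj φ ψ ihφ ihψ | impl φ ψ ihφ ihψ | biim φ ψ ihφ ihψ =>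
    exact ihφ.union ihψ

open Classical in
noncomputable def restrictTo (p : Set ν) : PropForm ν → PropForm ν
  | var x => if x ∈ p then var x else fls
  | tru => tru
  | fls => fls
  | neg φ => neg (restrictTo p φ)
  | conj φ ψ => conj (restrictTo p φ) (restrictTo p ψ)
  | disj φ ψ => disj (restrictTo p φ) (restrictTo p ψ)
  | impl φ ψ => impl (restrictTo p φ) (restrictTo p ψ)
  | biim φ ψ => biim (restrictTo p φ) (restrictTo p ψ)

open Classical in
theorem eval_restrictTo (p : Set ν) (φ : PropForm ν) (v : ν → Bool) :
    (restrictTo p φ).eval v = φ.eval (p.piecewise v fun _ => false) := by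
  induction φ with
  | var x => by_cases hx : x ∈ p <;> simp [restrictTo, eval, hx]
  | tru | fls => rfl
  | neg φ ih => simp only [restrictTo, eval, ih]
  | conj φ ψ ihφ ihψ | disj φ ψ ihφ ihψ | impl φ ψ ihφ ihψ | biim φ ψ ihφ ihψ =>
    simp only [restrictTo, eval, ihφ, ihψ]

theorem vars_restrictTo_subset (p : Set ν) (φ : PropForm ν) :
    (restrictTo p φ).vars ⊆ φ.vars ∩ p := by
  induction φ with
  | var x => by_cases hx : x ∈ p <;> simp [restrictTo, vars, hx]
  | tru | fls => simp [restrictTo, vars]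
  | neg φ ih => exact ih
  | conj φ ψ ihφ ihψ | disj φ ψ ihφ ihψ | impl φ ψ ihφ ihψ | biim φ ψ ihφ ihψ =>
    exact Set.union_subset
      (ihφ.trans (Set.inter_subset_inter_left p Set.subset_union_left))
      (ihψ.trans (Set.inter_subset_inter_left p Set.subset_union_right))

end PropForm

theorem expresses_vars (α : PropForm ν) : Expresses α.vars α :=
  ⟨α, fun _ => rfl, subset_rfl⟩

open Classical in
theorem Expresses.inter {α : PropForm ν} {V₁ V₂ : Set ν} (h₁ : Expresses V₁ α)
    (h₂ : Expresses V₂ α) : Expresses (V₁ ∩ V₂) α := by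
  obtain ⟨β₁, hαβ₁, hβ₁⟩ := h₁
  obtain ⟨β₂, hαβ₂, hβ₂⟩ := h₂
  refine ⟨β₁.restrictTo V₂, fun v => ?_,
    (β₁.vars_restrictTo_subset V₂).trans (Set.inter_subset_inter_left V₂ hβ₁)⟩
  set v' := V₂.piecewise v fun _ => false
  calc α.eval v = β₂.eval v := hαβ₂ v
    _ = β₂.eval v' := β₂.eval_congr fun x hx => (Set.piecewise_eq_of_mem _ _ _ (hβ₂ hx)).symm
    _ = β₁.eval v' := by rw [← hαβ₂, hαβ₁]
    _ = (β₁.restrictTo V₂).eval v := (β₁.eval_restrictTo V₂ v).symm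

/-- For every formula α, the collection of sets of variables
expressing α has a least element w.r.t. inclusion (the smallest language of α);
equivalently, the collection is closed under binary intersection. -/
theorem smallest_language_exists {ν : Type} (α : PropForm ν) :
    (∃ V : Set ν, Expresses V α ∧ ∀ W : Set ν, Expresses W α → V ⊆ W) ∧
    (∀ V₁ V₂ : Set ν, Expresses V₁ α → Expresses V₂ α →
      Expresses (V₁ ∩ V₂) α) := by
  have hinter (V₁ V₂ : Set ν) : Expresses V₁ α → Expresses V₂ α → Expresses (V₁ ∩ V₂) α :=
    Expresses.inter
  exact ⟨Set.exists_least_of_inter_closed hinter (expresses_vars α) α.vars_finite, hinter⟩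

end BeliefSeq
end

section
/- The relation R_l satisfies neither Epstein's condition R2 nor R5: (i) there exist propositional formulas α, β, γ such that R_l(α, β→γ) holds but R_l(α, β∧γ) fails (e.g., α = β = p and γ = ¬p, where β∧γ is a contradiction with empty smallest language while β→γ is equivalent to ¬p); (ii) there exist formulas α, β, γ such that R_l(α,β) holds but R_l(α, β→γ) fails (e.g., α = β = γ = p, where β→γ is a tautology with empty smallest language). -/
namespace BeliefSeq

variable {ν : Type}

/-! The smallest language is invariant under logical equivalence and under negation, and it
contains every variable on which the truth value depends. Hence `L_p = L_{p → ¬p} = {p}`,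
while the contradiction `p ∧ ¬p` and the tautology `p → p` have empty language. -/

theorem PropForm.eval_congr_s3 {v w : ν → Bool} (φ : PropForm ν)
    (h : ∀ x ∈ φ.vars, v x = w x) : φ.eval v = φ.eval w := by
  induction φ with
  | var x => exact h x rfl
  | tru | fls => rfl
  | neg φ ih => simp only [PropForm.eval, ih h]
  | conj φ ψ ihφ ihψ | disj φ ψ ihφ ihψ | impl φ ψ ihφ ihψ | biim φ ψ ihφ ihψ =>
    simp only [PropForm.eval, ihφ fun x hx => h x (Or.inl hx),
      ihψ fun x hx => h x (Or.inr hx)]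

theorem lang_subset_vars (α : PropForm ν) : Lang α ⊆ α.vars :=
  Set.sInter_subset_of_mem ⟨α, fun _ => rfl, subset_rfl⟩

theorem mem_lang_of_eval_ne {α : PropForm ν} {x : ν} {v w : ν → Bool}
    (hvw : ∀ y, y ≠ x → v y = w y) (hne : α.eval v ≠ α.eval w) : x ∈ Lang α := by
  rintro V ⟨β, hαβ, hβV⟩
  by_contra hx
  refine hne ?_
  rw [hαβ v, hαβ w]
  exact β.eval_congr_s3 fun y hy => hvw y fun hyx => hx (hyx ▸ hβV hy)

theorem lang_var (x : ν) : Lang (PropForm.var x) = {x} := by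
  classical
  refine (lang_subset_vars _).antisymm (Set.singleton_subset_iff.2 ?_)
  refine mem_lang_of_eval_ne (v := fun _ => true) (w := Function.update (fun _ => true) x false)
    (fun y hy => by simp [hy]) ?_
  simp [PropForm.eval]

theorem lang_congr {α β : PropForm ν} (h : Equiv α β) : Lang α = Lang β := by
  have expresses_iff (V : Set ν) : Expresses V α ↔ Expresses V β :=
    ⟨fun ⟨γ, hαγ, hγ⟩ => ⟨γ, fun v => (h v).symm.trans (hαγ v), hγ⟩,
      fun ⟨γ, hβγ, hγ⟩ => ⟨γ, fun v => (h v).trans (hβγ v), hγ⟩⟩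
  simp only [Lang, expresses_iff]

theorem lang_neg (α : PropForm ν) : Lang (PropForm.neg α) = Lang α := by
  have expresses_iff (V : Set ν) : Expresses V (PropForm.neg α) ↔ Expresses V α := by
    constructor
    · rintro ⟨β, hαβ, hβ⟩
      exact ⟨PropForm.neg β, fun v => by simpa [PropForm.eval] using hαβ v, hβ⟩
    · rintro ⟨β, hαβ, hβ⟩
      exact ⟨PropForm.neg β, fun v => by simp [PropForm.eval, hαβ v], hβ⟩
  simp only [Lang, expresses_iff]

theorem Tautology.lang_eq_empty {α : PropForm ν} (h : Tautology α) : Lang α = ∅ :=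
  Set.subset_empty_iff.1 <| lang_congr (β := PropForm.tru) h ▸ lang_subset_vars _

theorem Contradiction.lang_eq_empty {α : PropForm ν} (h : Contradiction α) : Lang α = ∅ :=
  Set.subset_empty_iff.1 <| lang_congr (β := PropForm.fls) h ▸ lang_subset_vars _

theorem not_directRel_of_lang_eq_empty {α β : PropForm ν} (h : Lang β = ∅) :
    ¬ DirectRel α β := by
  simp [DirectRel, h]

theorem directRel_var_self (x : ν) : DirectRel (PropForm.var x) (PropForm.var x) := by
  simp [DirectRel, lang_var]

/-- `R_l` satisfies neither Epstein's R2 nor R5: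
(i) there are α, β, γ with `R_l(α, β→γ)` but not `R_l(α, β∧γ)`;
(ii) there are α, β, γ with `R_l(α,β)` but not `R_l(α, β→γ)`. -/
theorem Rl_fails_R2_and_R5 :
    (∃ α β γ : PropForm ℕ,
      DirectRel α (PropForm.impl β γ) ∧ ¬ DirectRel α (PropForm.conj β γ)) ∧
    (∃ α β γ : PropForm ℕ,
      DirectRel α β ∧ ¬ DirectRel α (PropForm.impl β γ)) := by
  let p : PropForm ℕ := PropForm.var 0
  have p_impl_not_p : Equiv (PropForm.impl p (PropForm.neg p)) (PropForm.neg p) :=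
    fun _ => Bool.or_self _
  have p_and_not_p : Contradiction (PropForm.conj p (PropForm.neg p)) :=
    fun _ => Bool.and_not_self _
  have p_impl_p : Tautology (PropForm.impl p p) :=
    fun _ => Bool.not_or_self _
  refine ⟨⟨p, p, PropForm.neg p, ?_,
      not_directRel_of_lang_eq_empty p_and_not_p.lang_eq_empty⟩,
    ⟨p, p, p, directRel_var_self 0, not_directRel_of_lang_eq_empty p_impl_p.lang_eq_empty⟩⟩
  rw [DirectRel, lang_congr p_impl_not_p, lang_neg]
  exact directRel_var_self 0

end BeliefSeq
end
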